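/- Let X be a zigzag poset, ι : X' ↪ X the inclusion of the alternating subposet, and F a persistent sheaf on X. Then H^k(X, F) ≅ H^k(X', ι*F) as persistence modules, for all k ≥ 0. -/

import Mathlib

open CategoryTheory

/-! Zigzag posets.  A zigzag poset is a finite poset whose Hasse diagram is a path
`x_0 — x_1 — ... — x_n` with arbitrarily oriented edges.  We encode the orientation
of the edge between `x_l` and `x_{l+1}` by `o l : Bool` (`true` means `x_l < x_{l+1}`),
and `x_i ≤ x_j` iff all the edges between them point from `x_i` towards `x_j`. -/

/-- The order relation of the zigzag poset with edge orientations `o`. -/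
def zigzagLE (o : ℕ → Bool) (i j : ℕ) : Prop :=
  (i ≤ j ∧ ∀ l, i ≤ l → l < j → o l = true) ∨
  (j ≤ i ∧ ∀ l, j ≤ l → l < i → o l = false)

theorem zigzagLE_refl (o : ℕ → Bool) (i : ℕ) : zigzagLE o i i :=
  Or.inl ⟨le_rfl, fun _ h1 h2 => absurd (lt_of_le_of_lt h1 h2) (lt_irrefl _)⟩

theorem zigzagLE_trans (o : ℕ → Bool) (i j l : ℕ)
    (h1 : zigzagLE o i j) (h2 : zigzagLE o j l) : zigzagLE o i l := by
  rcases h1 with ⟨hij, hup1⟩ | ⟨hji, hdn1⟩ <;> rcases h2 with ⟨hjl, hup2⟩ | ⟨hlj, hdn2⟩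
  · refine Or.inl ⟨le_trans hij hjl, fun m hm1 hm2 => ?_⟩
    rcases Nat.lt_or_ge m j with h | h
    · exact hup1 m hm1 h
    · exact hup2 m h hm2
  · rcases le_or_gt i l with h | h
    · exact Or.inl ⟨h, fun m hm1 hm2 => hup1 m hm1 (lt_of_lt_of_le hm2 hlj)⟩
    · exact Or.inr ⟨le_of_lt h, fun m hm1 hm2 => hdn2 m hm1 (lt_of_lt_of_le hm2 hij)⟩
  · rcases le_or_gt i l with h | h
    · exact Or.inl ⟨h, fun m hm1 hm2 => hup2 m (le_trans hji hm1) hm2⟩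
    · exact Or.inr ⟨le_of_lt h, fun m hm1 hm2 => hdn1 m (le_trans hjl hm1) hm2⟩
  · refine Or.inr ⟨le_trans hlj hji, fun m hm1 hm2 => ?_⟩
    rcases Nat.lt_or_ge m j with h | h
    · exact hdn2 m hm1 h
    · exact hdn1 m h hm2

theorem zigzagLE_antisymm (o : ℕ → Bool) (i j : ℕ)
    (h1 : zigzagLE o i j) (h2 : zigzagLE o j i) : i = j := by
  rcases h1 with ⟨hij, hup1⟩ | ⟨hji, hdn1⟩ <;>
    rcases h2 with ⟨hji', hup2⟩ | ⟨hij', hdn2⟩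
  · omega
  · rcases Nat.lt_or_ge i j with h | h
    · have ht := hup1 i le_rfl h
      have hf := hdn2 i le_rfl h
      simp [ht] at hf
    · omega
  · rcases Nat.lt_or_ge j i with h | h
    · have ht := hup2 j le_rfl h
      have hf := hdn1 j le_rfl h
      simp [ht] at hf
    · omega
  · omega

/-- The zigzag poset on `{x_0, ..., x_n}` with edge orientations `o`. -/
def Zigzag (n : ℕ) (o : ℕ → Bool) : Type := Fin (n + 1)

instance (n : ℕ) (o : ℕ → Bool) : PartialOrder (Zigzag n o) where
  le i j := zigzagLE o (Fin.val i) (Fin.val j)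
  le_refl i := zigzagLE_refl o _
  le_trans i j l := zigzagLE_trans o _ _ _
  le_antisymm i j h1 h2 := Fin.ext (zigzagLE_antisymm o _ _ h1 h2)

/-- The index of a point of the zigzag poset. -/
def Zigzag.idx {n : ℕ} {o : ℕ → Bool} (x : Zigzag n o) : ℕ := Fin.val x

/-- The alternating subposet `X' ⊆ X`: all minimal elements together with the
internal maximal elements (the maximal elements flanked by minimal elements on
both sides); this is the alternating sequence of minimal and internal maximal
elements of the zigzag. -/
def altSet (n : ℕ) (o : ℕ → Bool) : Set (Zigzag n o) :=
  {x | IsMin x ∨ (IsMax x ∧ (∃ y : Zigzag n o, IsMin y ∧ y.idx < x.idx) ∧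
    (∃ y : Zigzag n o, IsMin y ∧ x.idx < y.idx))}

/-- The alternating subposet, with the induced order. -/
def AltSub (n : ℕ) (o : ℕ → Bool) : Type := {x : Zigzag n o // x ∈ altSet n o}

instance (n : ℕ) (o : ℕ → Bool) : PartialOrder (AltSub n o) :=
  inferInstanceAs (PartialOrder {x : Zigzag n o // x ∈ altSet n o})

/-- The inclusion `ι : X' ↪ X` is order preserving. -/
lemma altIncl_monotone (n : ℕ) (o : ℕ → Bool) :
    Monotone (fun x : AltSub n o => (x.val : Zigzag n o)) := fun _ _ h => h

/-- The restriction (pullback) functor `ι*` of sheaves along the inclusion of the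
alternating subposet. -/
noncomputable def restrictAlt (n : ℕ) (o : ℕ → Bool) (C : Type*) [Category C] :
    (Zigzag n o ⥤ C) ⥤ (AltSub n o ⥤ C) :=
  (Functor.whiskeringLeft (AltSub n o) (Zigzag n o) C).obj (altIncl_monotone n o).functor

open CategoryTheory.Limits

/-! The inclusion `ι : X' ↪ X` has a right adjoint: below every `x : X` there is a greatest
point of `X'`, namely `x` itself if `x ∈ X'`, and otherwise the unique minimal element below `x`
(two distinct ones would lie on both sides of `x` and make it an internal maximum).
Hence `ι` is initial, so `lim_X ≅ ι* ⋙ lim_X'`; and `ι*` is exact with an exact left adjoint,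
so it sends injective resolutions to injective resolutions and
`R^k lim_X ≅ R^k (ι* ⋙ lim_X') ≅ ι* ⋙ R^k lim_X'` naturally. Whiskering with `F` gives the
isomorphism of persistence modules. -/

theorem exists_galoisConnection_subtype_val_of_isGreatest {α : Type*} [Preorder α] {S : Set α}
    (h : ∀ x, ∃ s, IsGreatest {t | t ∈ S ∧ t ≤ x} s) :
    ∃ u : α → S, GaloisConnection (fun s : S => (s : α)) u := by
  choose u hu using h
  refine ⟨fun x => ⟨u x, (hu x).1.1⟩,
    fun s x => ⟨fun hsx => (hu x).2 ⟨s.2, hsx⟩, fun hsu => ?_⟩⟩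
  exact (show (s : α) ≤ u x from hsu).trans (hu x).1.2

namespace Zigzag

variable {n : ℕ} {o : ℕ → Bool}

lemma idx_injective : Function.Injective (Zigzag.idx : Zigzag n o → ℕ) :=
  fun _ _ h => Fin.ext h

lemma le_iff {x y : Zigzag n o} : x ≤ y ↔ zigzagLE o x.idx y.idx := Iff.rfl

lemma edge_eq_true_of_le {x y : Zigzag n o} (h : x ≤ y) {l : ℕ} (hx : x.idx ≤ l)
    (hy : l < y.idx) : o l = true := by
  rcases le_iff.mp h with ⟨-, hup⟩ | ⟨hyx, -⟩
  · exact hup l hx hy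
  · omega

lemma edge_eq_false_of_le {x y : Zigzag n o} (h : x ≤ y) {l : ℕ} (hy : y.idx ≤ l)
    (hx : l < x.idx) : o l = false := by
  rcases le_iff.mp h with ⟨hxy, -⟩ | ⟨-, hdown⟩
  · omega
  · exact hdown l hy hx

lemma le_of_le_of_idx_mem_uIcc {x y z : Zigzag n o} (h : y ≤ x)
    (hz : z.idx ∈ Set.uIcc y.idx x.idx) : y ≤ z := by
  rw [Set.mem_uIcc] at hz
  rcases le_iff.mp h with ⟨hyx, hup⟩ | ⟨hxy, hdown⟩
  · exact le_iff.mpr (Or.inl ⟨by omega, fun l h1 h2 => hup l h1 (by omega)⟩)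
  · exact le_iff.mpr (Or.inr ⟨by omega, fun l h1 h2 => hdown l (by omega) h2⟩)

lemma isMax_of_le_of_le {x y z : Zigzag n o} (hy : y ≤ x) (hyx : y.idx < x.idx) (hz : z ≤ x)
    (hxz : x.idx < z.idx) : IsMax x := by
  have hleft : o (x.idx - 1) = true := edge_eq_true_of_le hy (by omega) (by omega)
  have hright : o x.idx = false := edge_eq_false_of_le hz le_rfl hxz
  intro w hxw
  suffices w.idx = x.idx by rw [idx_injective this]
  rcases lt_trichotomy w.idx x.idx with hlt | heq | hgt
  · have := edge_eq_false_of_le hxw (l := x.idx - 1) (by omega) (by omega)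
    simp [hleft] at this
  · exact heq
  · have := edge_eq_true_of_le hxw le_rfl hgt
    simp [hright] at this

lemma eq_of_isMin_of_le_of_notMem_altSet {x a b : Zigzag n o} (hx : x ∉ altSet n o)
    (ha : IsMin a) (hb : IsMin b) (hax : a ≤ x) (hbx : b ≤ x) : a = b := by
  wlog hab : a.idx ≤ b.idx generalizing a b
  · exact (this hb ha hbx hax (by omega)).symm
  by_cases hbx' : b.idx ≤ x.idx
  · exact hb.eq_of_le (le_of_le_of_idx_mem_uIcc hax (Set.mem_uIcc.mpr (Or.inl ⟨hab, hbx'⟩)))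
  by_cases hxa : x.idx ≤ a.idx
  · exact (ha.eq_of_le
      (le_of_le_of_idx_mem_uIcc hbx (Set.mem_uIcc.mpr (Or.inr ⟨hxa, hab⟩)))).symm
  exact absurd (Or.inr ⟨isMax_of_le_of_le hax (by omega) hbx (by omega),
    ⟨a, ha, by omega⟩, ⟨b, hb, by omega⟩⟩) hx

lemma exists_isGreatest_altSet_le (x : Zigzag n o) :
    ∃ s, IsGreatest {t | t ∈ altSet n o ∧ t ≤ x} s := by
  by_cases hx : x ∈ altSet n o
  · exact ⟨x, ⟨hx, le_rfl⟩, fun t ht => ht.2⟩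
  have : Finite (Zigzag n o) := inferInstanceAs (Finite (Fin (n + 1)))
  obtain ⟨m, hmx, hm⟩ := exists_minimal_le_of_wellFoundedLT (fun _ => True) x trivial
  have hm : IsMin m := minimal_true.mp hm
  refine ⟨m, ⟨Or.inl hm, hmx⟩, fun t ⟨ht, htx⟩ => ?_⟩
  have htmin : IsMin t := ht.resolve_right fun hmax => hx (le_antisymm htx (hmax.1 htx) ▸ ht)
  exact (eq_of_isMin_of_le_of_notMem_altSet hx htmin hm htx hmx).le

end Zigzag

namespace CategoryTheory

section RightDerived

variable {A B T : Type*} [Category A] [Category B] [Category T] [Abelian A] [Abelian B]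
  [Abelian T]

@[simps cocomplex]
noncomputable def Functor.mapInjectiveResolution (Φ : A ⥤ B) [Φ.Additive]
    [Φ.PreservesInjectiveObjects] [Φ.PreservesHomology] {Z : A} (I : InjectiveResolution Z) :
    InjectiveResolution (Φ.obj Z) where
  cocomplex := (Φ.mapHomologicalComplex _).obj I.cocomplex
  injective n := Φ.injective_obj_of_injective (I.injective n)
  ι := (HomologicalComplex.singleMapHomologicalComplex _ _ _).inv.app _ ≫
    (Φ.mapHomologicalComplex _).map I.ι
  quasiIso := inferInstance

@[simp]
lemma Functor.mapInjectiveResolution_ι_f_zero (Φ : A ⥤ B) [Φ.Additive]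
    [Φ.PreservesInjectiveObjects] [Φ.PreservesHomology] {Z : A} (I : InjectiveResolution Z) :
    (Φ.mapInjectiveResolution I).ι.f 0 = Φ.map (I.ι.f 0) := by
  simp only [CochainComplex.single₀_obj_zero, Functor.mapInjectiveResolution, Functor.comp_obj,
    HomologicalComplex.comp_f, HomologicalComplex.singleMapHomologicalComplex_inv_app_self,
    CochainComplex.single₀ObjXSelf, Iso.refl_hom, Iso.refl_inv, Functor.map_id,
    Category.comp_id, Functor.mapHomologicalComplex_map_f]
  exact Category.id_comp _

variable [HasInjectiveResolutions A]

noncomputable def NatIso.rightDerived {F G : A ⥤ T} [F.Additive] [G.Additive] (e : F ≅ G)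
    (n : ℕ) : F.rightDerived n ≅ G.rightDerived n where
  hom := NatTrans.rightDerived e.hom n
  inv := NatTrans.rightDerived e.inv n
  hom_inv_id := by rw [← NatTrans.rightDerived_comp, e.hom_inv_id, NatTrans.rightDerived_id]
  inv_hom_id := by rw [← NatTrans.rightDerived_comp, e.inv_hom_id, NatTrans.rightDerived_id]

/-- Both sides are computed from one injective resolution `I` of `X`, as the cohomology of
`L` applied to the injective resolution `Φ I` of `Φ X`. -/
noncomputable def Functor.rightDerivedCompIso [HasInjectiveResolutions B] (Φ : A ⥤ B)
    (L : B ⥤ T) [Φ.Additive] [Φ.PreservesInjectiveObjects] [Φ.PreservesHomology] [L.Additive]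
    (n : ℕ) : (Φ ⋙ L).rightDerived n ≅ Φ ⋙ L.rightDerived n :=
  NatIso.ofComponents
    (fun X => (injectiveResolution X).isoRightDerivedObj (Φ ⋙ L) n ≪≫
      ((Φ.mapInjectiveResolution (injectiveResolution X)).isoRightDerivedObj L n).symm)
    (fun {X Y} f => by
      let φ := InjectiveResolution.desc f (injectiveResolution Y) (injectiveResolution X)
      have comm := InjectiveResolution.desc_commutes_zero f (injectiveResolution Y)
        (injectiveResolution X)
      have hΦ : (Φ.mapInjectiveResolution (injectiveResolution X)).ι.f 0 ≫
          ((Φ.mapHomologicalComplex _).map φ).f 0 =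
            Φ.map f ≫ (Φ.mapInjectiveResolution (injectiveResolution Y)).ι.f 0 := by
        rw [Φ.mapInjectiveResolution_ι_f_zero, Φ.mapInjectiveResolution_ι_f_zero]
        exact (Φ.map_comp _ _).symm.trans ((congrArg Φ.map comm).trans (Φ.map_comp _ _))
      show _ ≫ (_ ≫ _) = (_ ≫ _) ≫ _
      rw [← Category.assoc, InjectiveResolution.isoRightDerivedObj_hom_naturality f _ _ φ comm,
        Category.assoc, Category.assoc]
      congr 1
      exact (InjectiveResolution.isoRightDerivedObj_inv_naturality (Φ.map f)
        (Φ.mapInjectiveResolution _) (Φ.mapInjectiveResolution _)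
        ((Φ.mapHomologicalComplex _).map φ) hΦ L n).symm)

end RightDerived

section RestrictionAlongLeftAdjoint

variable {J K C : Type*} [Category J] [Category K] [Category C] [Abelian C]
  {ι : J ⥤ K} {π : K ⥤ J}

lemma Adjunction.preservesInjectiveObjects_whiskeringLeft (adj : ι ⊣ π) :
    ((Functor.whiskeringLeft J K C).obj ι).PreservesInjectiveObjects :=
  Functor.preservesInjectiveObjects_of_adjunction_of_preservesMonomorphisms (adj.whiskerLeft C)

noncomputable def Adjunction.rightDerivedLimIso (adj : ι ⊣ π) [HasLimitsOfShape J C]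
    [HasLimitsOfShape K C] [(lim : (J ⥤ C) ⥤ C).Additive] [(lim : (K ⥤ C) ⥤ C).Additive]
    [HasInjectiveResolutions (J ⥤ C)] [HasInjectiveResolutions (K ⥤ C)] (n : ℕ) :
    (lim : (K ⥤ C) ⥤ C).rightDerived n ≅
      (Functor.whiskeringLeft J K C).obj ι ⋙ (lim : (J ⥤ C) ⥤ C).rightDerived n :=
  have : ι.Initial := Functor.initial_of_adjunction adj
  have := adj.preservesInjectiveObjects_whiskeringLeft (C := C)
  NatIso.rightDerived (Functor.Initial.limIso ι).symm n ≪≫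
    Functor.rightDerivedCompIso _ _ n

end RestrictionAlongLeftAdjoint

end CategoryTheory

universe u_1

theorem persistent_cohomology_zigzag_alt_iso_general (k : Type) [Field k] (n : ℕ) (o : ℕ → Bool)
    [(lim : (Zigzag n o ⥤ ModuleCat.{u_1} k) ⥤ ModuleCat.{u_1} k).Additive]
    [(lim : (AltSub n o ⥤ ModuleCat.{u_1} k) ⥤ ModuleCat.{u_1} k).Additive]
    [HasInjectiveResolutions (Zigzag n o ⥤ ModuleCat.{u_1} k)]
    [HasInjectiveResolutions (AltSub n o ⥤ ModuleCat.{u_1} k)]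
    (F : ℕ ⥤ (Zigzag n o ⥤ ModuleCat.{u_1} k))
    (j : ℕ) :
    Nonempty ((F ⋙ (lim : (Zigzag n o ⥤ ModuleCat.{u_1} k) ⥤ ModuleCat.{u_1} k).rightDerived j) ≅
      ((F ⋙ restrictAlt n o (ModuleCat.{u_1} k)) ⋙
        (lim : (AltSub n o ⥤ ModuleCat.{u_1} k) ⥤ ModuleCat.{u_1} k).rightDerived j)) := by
  obtain ⟨π, gc⟩ :
      ∃ π : Zigzag n o → AltSub n o, GaloisConnection (fun x : AltSub n o => x.val) π :=
    exists_galoisConnection_subtype_val_of_isGreatest Zigzag.exists_isGreatest_altSet_le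
  exact ⟨Functor.isoWhiskerLeft F (gc.adjunction.rightDerivedLimIso j) ≪≫
    (Functor.associator _ _ _).symm⟩

/-- Let `X` be a zigzag poset, `ι : X' ↪ X` the inclusion of the
alternating subposet, and `F` a persistent sheaf on `X` (a functor `ℕ ⥤ Shv(X, vec)`
of finite type).  Then `H^j(X, F) ≅ H^j(X', ι*F)` as persistence modules (functors
`ℕ ⥤ vec`), for every `j ≥ 0`. -/
theorem persistent_cohomology_zigzag_alt_iso (k : Type) [Field k] (n : ℕ) (o : ℕ → Bool)
    [(lim : (Zigzag n o ⥤ ModuleCat.{u_1} k) ⥤ ModuleCat.{u_1} k).Additive]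
    [(lim : (AltSub n o ⥤ ModuleCat.{u_1} k) ⥤ ModuleCat.{u_1} k).Additive]
    [HasInjectiveResolutions (Zigzag n o ⥤ ModuleCat.{u_1} k)]
    [HasInjectiveResolutions (AltSub n o ⥤ ModuleCat.{u_1} k)]
    (F : ℕ ⥤ (Zigzag n o ⥤ ModuleCat.{u_1} k))
    (hft : ∃ m : ℕ, ∀ i j : ℕ, ∀ h : i ≤ j, m ≤ i → CategoryTheory.IsIso (F.map h.hom))
    (j : ℕ) :
    Nonempty ((F ⋙ (lim : (Zigzag n o ⥤ ModuleCat.{u_1} k) ⥤ ModuleCat.{u_1} k).rightDerived j) ≅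
      ((F ⋙ restrictAlt n o (ModuleCat.{u_1} k)) ⋙
        (lim : (AltSub n o ⥤ ModuleCat.{u_1} k) ⥤ ModuleCat.{u_1} k).rightDerived j)) :=
  persistent_cohomology_zigzag_alt_iso_general k n o F j
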